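/- arXiv:2306.08742 — 6 statements merged into one kernel-verified Lean document; each statement's English description precedes it below -/
import Mathlib

section
/- Let M be an s×s real matrix and define M_* := M B + C, where B is the s×s matrix with B_{i1} = −1 and B_{ii} = 1 for 2 ≤ i ≤ s and all other entries zero, and C is the s×s matrix with C_{11} = 1, C_{ss} = −1 and all other entries zero. If M_* + M_*ᵀ is positive semidefinite of rank s−1, then there exists a constant c > 0 such that ξᵀ M_* ξ ≥ c Σ_{1 ≤ i < j ≤ s} (ξᵢ − ξⱼ)² for every vector ξ = (ξ₁, …, ξ_s) ∈ ℝ^s. -/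
noncomputable section

open Real Matrix

/-- Partial derivative in the first (time) variable. -/
def dt1 (f : ℝ → ℝ → ℝ) : ℝ → ℝ → ℝ := fun t x => deriv (fun s => f s x) t

/-- Partial derivative in the second (space) variable. -/
def dx1 (f : ℝ → ℝ → ℝ) : ℝ → ℝ → ℝ := fun t x => deriv (fun y => f t y) x

/-- Mixed partial derivative `∂ₜ^[r₁] ∂ₓ^[r₂] f`. -/
def Dmix (r1 r2 : ℕ) (f : ℝ → ℝ → ℝ) : ℝ → ℝ → ℝ := dt1^[r1] (dx1^[r2] f)

/-- Squared L² norm in x over [0, 2π]. -/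
def L2sq (f : ℝ → ℝ) : ℝ := ∫ x in (0:ℝ)..(2 * Real.pi), (f x) ^ 2

/-- Squared Sobolev H^s norm: sum of squared L² norms of x-derivatives up to order s. -/
def Hsq (s : ℕ) (f : ℝ → ℝ) : ℝ := ∑ r ∈ Finset.range (s + 1), L2sq (deriv^[r] f)

/-- Smoothness (C^∞) jointly in both variables. -/
def Smooth2 (f : ℝ → ℝ → ℝ) : Prop := ContDiff ℝ (⊤ : ℕ∞) (fun p : ℝ × ℝ => f p.1 p.2)

/-- 2π-periodicity in the space variable. -/
def Periodic2 (f : ℝ → ℝ → ℝ) : Prop := ∀ t x, f t (x + 2 * Real.pi) = f t x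

/-- The linear hyperbolic relaxation system in the variables (u, w):
`∂ₜu + ∂ₓ(bu + w) = 0`, `∂ₜw + ∂ₓ((1−b²)u − bw) = −(1/ε) w`. -/
def IsSolution (b ε : ℝ) (u w : ℝ → ℝ → ℝ) : Prop :=
  (∀ t x, dt1 u t x + deriv (fun y => b * u t y + w t y) x = 0) ∧
  (∀ t x, dt1 w t x + deriv (fun y => (1 - b ^ 2) * u t y - b * w t y) x = -(1 / ε) * w t x)

/-- Real trigonometric polynomial of degree ≤ N (membership in 𝒫_N). -/
def IsTrigPoly (N : ℕ) (f : ℝ → ℝ) : Prop :=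
  ∃ a c : ℕ → ℝ, ∀ x, f x = ∑ k ∈ Finset.range (N + 1),
    (a k * Real.cos (k * x) + c k * Real.sin (k * x))

/-- The L²-orthogonal projection 𝒫_N onto trigonometric polynomials of degree ≤ N. -/
def fourierProjR (N : ℕ) (f : ℝ → ℝ) : ℝ → ℝ := fun x =>
  (1 / (2 * Real.pi)) * (∫ y in (0:ℝ)..(2 * Real.pi), f y)
  + ∑ k ∈ Finset.Icc 1 N,
      ((1 / Real.pi) * (∫ y in (0:ℝ)..(2 * Real.pi), f y * Real.cos (k * y)) * Real.cos (k * x)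
      + (1 / Real.pi) * (∫ y in (0:ℝ)..(2 * Real.pi), f y * Real.sin (k * y)) * Real.sin (k * x))

/-- Strictly lower triangular matrix. -/
def StrictLowerTri {s : ℕ} (A : Matrix (Fin s) (Fin s) ℝ) : Prop :=
  ∀ i j : Fin s, i ≤ j → A i j = 0

/-- Lower triangular matrix. -/
def LowerTri {s : ℕ} (A : Matrix (Fin s) (Fin s) ℝ) : Prop :=
  ∀ i j : Fin s, i < j → A i j = 0

def finSucc' {s : ℕ} (i : Fin (s - 1)) : Fin s := ⟨i.1 + 1, by have := i.isLt; omega⟩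

/-- The submatrix Â = (a_{ij})_{2 ≤ i,j ≤ s}. -/
def Ahat {s : ℕ} (A : Matrix (Fin s) (Fin s) ℝ) : Matrix (Fin (s - 1)) (Fin (s - 1)) ℝ :=
  Matrix.of fun i j => A (finSucc' i) (finSucc' j)

/-- Type CK: lower triangular, zero first row, Â invertible. -/
def TypeCK {s : ℕ} (A : Matrix (Fin s) (Fin s) ℝ) : Prop :=
  LowerTri A ∧ (∀ i j : Fin s, (i : ℕ) = 0 → A i j = 0) ∧ IsUnit (Ahat A)

/-- Implicitly stiffly accurate (ISA): the last row of A equals the implicit weight vector. -/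
def ISA {s : ℕ} (A : Matrix (Fin s) (Fin s) ℝ) (bv : Fin s → ℝ) : Prop :=
  ∀ i j : Fin s, (i : ℕ) = s - 1 → A i j = bv j

/-- v generates the one-dimensional null space of A. -/
def NullGen {s : ℕ} (A : Matrix (Fin s) (Fin s) ℝ) (v : Fin s → ℝ) : Prop :=
  v ≠ 0 ∧ A.mulVec v = 0 ∧ ∀ x : Fin s → ℝ, A.mulVec x = 0 → ∃ t : ℝ, x = t • v

/-- Row sums of a Butcher matrix (the abscissae). -/
def cvec {s : ℕ} (A : Matrix (Fin s) (Fin s) ℝ) : Fin s → ℝ := fun i => ∑ j, A i j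

/-- The matrix B with B_{i1} = −1 and B_{ii} = 1 for 2 ≤ i ≤ s (1-based), other entries 0. -/
def Bmat (s : ℕ) : Matrix (Fin s) (Fin s) ℝ :=
  Matrix.of fun i j =>
    if (i : ℕ) = 0 then 0 else if (j : ℕ) = 0 then -1 else if j = i then 1 else 0

/-- The matrix C with C_{11} = 1, C_{ss} = −1 (1-based), other entries 0. -/
def Cmat (s : ℕ) : Matrix (Fin s) (Fin s) ℝ :=
  Matrix.of fun i j =>
    (if (i : ℕ) = 0 ∧ (j : ℕ) = 0 then (1 : ℝ) else 0) +
    (if (i : ℕ) = s - 1 ∧ (j : ℕ) = s - 1 then (-1 : ℝ) else 0)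

/-- M_* = M B + C. -/
def Mstar {s : ℕ} (M : Matrix (Fin s) (Fin s) ℝ) : Matrix (Fin s) (Fin s) ℝ :=
  M * Bmat s + Cmat s

/-- Condition (M1): M A + (M A)ᵀ is positive semidefinite of rank s − 1. -/
def CondM1 {s : ℕ} (M A : Matrix (Fin s) (Fin s) ℝ) : Prop :=
  (M * A + (M * A)ᵀ).PosSemidef ∧ (M * A + (M * A)ᵀ).rank = s - 1

/-- Condition (M2): M_* + M_*ᵀ is positive semidefinite of rank s − 1. -/
def CondM2 {s : ℕ} (M : Matrix (Fin s) (Fin s) ℝ) : Prop :=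
  (Mstar M + (Mstar M)ᵀ).PosSemidef ∧ (Mstar M + (Mstar M)ᵀ).rank = s - 1

/-- One time step of the fully discrete IMEX-RK/Fourier-Galerkin scheme:
stage values (Us, Ws) and the update from (Un, Wn) to (Un1, Wn1). -/
def SchemeStep {s : ℕ} (Atil A : Matrix (Fin s) (Fin s) ℝ) (btil bv : Fin s → ℝ)
    (b ε Δt : ℝ) (Un Wn : ℝ → ℝ) (Us Ws : Fin s → ℝ → ℝ) (Un1 Wn1 : ℝ → ℝ) : Prop :=
  (∀ i x, Us i x = Un x - Δt * ∑ j, Atil i j * (b * deriv (Us j) x + deriv (Ws j) x)) ∧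
  (∀ i x, Ws i x = Wn x
      - Δt * ∑ j, Atil i j * ((1 - b ^ 2) * deriv (Us j) x - b * deriv (Ws j) x)
      - (Δt / ε) * ∑ j, A i j * Ws j x) ∧
  (∀ x, Un1 x = Un x - Δt * ∑ j, btil j * (b * deriv (Us j) x + deriv (Ws j) x)) ∧
  (∀ x, Wn1 x = Wn x
      - Δt * ∑ j, btil j * ((1 - b ^ 2) * deriv (Us j) x - b * deriv (Ws j) x)
      - (Δt / ε) * ∑ j, bv j * Ws j x)


lemma sum_pairs_eq {s : ℕ} (η : Fin s → ℝ) (h0 : ∑ i, η i = 0) :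
    (∑ i : Fin s, ∑ j : Fin s, if i < j then (η i - η j)^2 else 0) = s * (η ⬝ᵥ η) := by
  have hrow : ∀ i : Fin s, ∑ j, (η i - η j)^2
      = s * η i ^ 2 - 2 * η i * (∑ j, η j) + ∑ j, η j ^ 2 := by
    intro i
    simp only [sub_sq, Finset.sum_add_distrib, Finset.sum_sub_distrib, Finset.sum_const,
      Finset.card_univ, Fintype.card_fin, nsmul_eq_mul, Finset.mul_sum]
  have hdot : η ⬝ᵥ η = ∑ j, η j ^ 2 := by
    simp [dotProduct, pow_two]
  have hfull : ∑ i : Fin s, ∑ j : Fin s, (η i - η j)^2 = 2 * ((s : ℝ) * (η ⬝ᵥ η)) := by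
    simp only [hrow, h0, Finset.sum_add_distrib, Finset.sum_sub_distrib, Finset.sum_const,
      Finset.card_univ, Fintype.card_fin, nsmul_eq_mul, mul_zero, zero_mul, sub_zero]
    rw [← Finset.mul_sum, hdot]
    ring
  have hsym : (∑ i : Fin s, ∑ j : Fin s, if i < j then (η i - η j)^2 else 0)
      = (∑ i : Fin s, ∑ j : Fin s, if j < i then (η i - η j)^2 else 0) := by
    rw [Finset.sum_comm]
    refine Finset.sum_congr rfl fun i _ => Finset.sum_congr rfl fun j _ => ?_
    split_ifs
    · ring
    · rfl
  have h2T : 2 * (∑ i : Fin s, ∑ j : Fin s, if i < j then (η i - η j)^2 else 0)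
      = ∑ i : Fin s, ∑ j : Fin s, (η i - η j)^2 := by
    rw [two_mul]
    nth_rewrite 2 [hsym]
    rw [← Finset.sum_add_distrib]
    congr 1; ext i
    rw [← Finset.sum_add_distrib]
    congr 1; ext j
    rcases lt_trichotomy i j with h | rfl | h
    · simp [h, not_lt_of_gt h]
    · simp
    · simp [h, not_lt_of_gt h]
  nlinarith [hfull, h2T]

lemma coercive_of_pos {s : ℕ} (hs : 0 < s) (S : Matrix (Fin s) (Fin s) ℝ)
    (hpos : ∀ x : Fin s → ℝ, x ≠ 0 → 0 < x ⬝ᵥ S *ᵥ x) :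
    ∃ c > (0:ℝ), ∀ x : Fin s → ℝ, c * (x ⬝ᵥ x) ≤ x ⬝ᵥ S *ᵥ x := by
  set f : (Fin s → ℝ) → ℝ := fun x => x ⬝ᵥ S *ᵥ x with hfdef
  have hf : Continuous f := by
    have : f = fun x => ∑ i, x i * ∑ j, S i j * x j := by
      ext x; simp [hfdef, dotProduct, mulVec]
    rw [this]
    exact continuous_finset_sum _ fun i _ => (continuous_apply i).mul
      (continuous_finset_sum _ fun j _ => continuous_const.mul (continuous_apply j))
  have hg : Continuous fun x : Fin s → ℝ => x ⬝ᵥ x := by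
    have : (fun x : Fin s → ℝ => x ⬝ᵥ x) = fun x => ∑ i, x i * x i := by
      ext x; simp [dotProduct]
    rw [this]
    exact continuous_finset_sum _ fun i _ => (continuous_apply i).mul (continuous_apply i)
  set K : Set (Fin s → ℝ) := (fun x : Fin s → ℝ => x ⬝ᵥ x) ⁻¹' {1} with hKdef
  have hclosed : IsClosed K := isClosed_singleton.preimage hg
  have hsub : K ⊆ Metric.closedBall 0 1 := by
    intro x hx
    have hx1 : x ⬝ᵥ x = 1 := hx
    rw [Metric.mem_closedBall, dist_zero_right]
    rw [pi_norm_le_iff_of_nonneg zero_le_one]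
    intro i
    rw [Real.norm_eq_abs, abs_le_one_iff_mul_self_le_one]
    calc x i * x i ≤ ∑ j, x j * x j :=
          Finset.single_le_sum (fun j _ => mul_self_nonneg (x j)) (Finset.mem_univ i)
      _ = 1 := hx1
  have hKc : IsCompact K :=
    (isCompact_closedBall (0 : Fin s → ℝ) 1).of_isClosed_subset hclosed hsub
  have hne : K.Nonempty := by
    refine ⟨Pi.single ⟨0, hs⟩ 1, ?_⟩
    simp [hKdef, dotProduct, Pi.single_apply]
  obtain ⟨x0, hx0K, hmin⟩ := hKc.exists_isMinOn hne hf.continuousOn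
  have hx0ne : x0 ≠ 0 := by
    intro h
    have : x0 ⬝ᵥ x0 = 1 := hx0K
    rw [h] at this
    simp at this
  refine ⟨f x0, hpos x0 hx0ne, fun x => ?_⟩
  rcases eq_or_ne x 0 with rfl | hx
  · simp [hfdef]
  · have hxx : 0 < x ⬝ᵥ x := by
      have hnn : 0 ≤ x ⬝ᵥ x := Finset.sum_nonneg fun i _ => mul_self_nonneg (x i)
      rcases hnn.lt_or_eq with h | h
      · exact h
      · exact absurd (dotProduct_self_eq_zero.mp h.symm) hx
    set r : ℝ := Real.sqrt (x ⬝ᵥ x) with hrdef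
    have hr : 0 < r := Real.sqrt_pos.mpr hxx
    have hr2 : r * r = x ⬝ᵥ x := Real.mul_self_sqrt hxx.le
    have huK : (r⁻¹ • x) ∈ K := by
      have : (r⁻¹ • x) ⬝ᵥ (r⁻¹ • x) = r⁻¹ * (r⁻¹ * (x ⬝ᵥ x)) := by
        rw [smul_dotProduct, dotProduct_smul]; simp [smul_eq_mul]
      simp only [hKdef, Set.mem_preimage, Set.mem_singleton_iff, this, ← hr2]
      field_simp
    have hfu : f (r⁻¹ • x) = r⁻¹ * (r⁻¹ * f x) := by
      simp only [hfdef, smul_dotProduct, mulVec_smul, dotProduct_smul, smul_eq_mul]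
    have hle : f x0 ≤ r⁻¹ * (r⁻¹ * f x) := by
      have := hmin huK
      simpa [hfu] using this
    have hfx : f x = x ⬝ᵥ S *ᵥ x := rfl
    have h1 : r * r * f x0 ≤ f x := by
      calc r * r * f x0 ≤ r * r * (r⁻¹ * (r⁻¹ * f x)) :=
            mul_le_mul_of_nonneg_left hle (mul_pos hr hr).le
        _ = f x := by field_simp
    rw [← hfx, ← hr2]
    linarith [h1]

lemma sum_ite_val {s : ℕ} (k : ℕ) (hk : k < s) (a : ℝ) :
    (∑ j : Fin s, if (j : ℕ) = k then a else 0) = a := by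
  rw [Finset.sum_congr rfl (g := fun j => if j = (⟨k, hk⟩ : Fin s) then a else 0)
    (fun j _ => by simp [Fin.ext_iff])]
  simp

lemma Bmat_mulVec_one (s : ℕ) : (Bmat s) *ᵥ (fun _ => (1:ℝ)) = 0 := by
  funext i
  show (∑ j, Bmat s i j * 1) = 0
  simp only [Bmat, of_apply, mul_one]
  by_cases hi : (i : ℕ) = 0
  · simp [hi]
  · simp only [hi, if_false]
    have h1 : ∀ j : Fin s, (if (j : ℕ) = 0 then (-1:ℝ) else if j = i then 1 else 0)
        = (if (j : ℕ) = 0 then (-1:ℝ) else 0) + (if j = i then 1 else 0) := by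
      intro j
      by_cases hj : (j : ℕ) = 0
      · have : j ≠ i := fun h => hi (h ▸ hj)
        simp [hj, this]
      · simp [hj]
    rw [Finset.sum_congr rfl fun j _ => h1 j, Finset.sum_add_distrib,
      sum_ite_val 0 i.pos (-1)]
    simp

lemma one_dot_C (s : ℕ) (hs : 0 < s) :
    (fun _ => (1:ℝ)) ⬝ᵥ (Cmat s) *ᵥ (fun _ => (1:ℝ)) = 0 := by
  have hrow : ∀ i : Fin s, (∑ j, Cmat s i j)
      = (if (i : ℕ) = 0 then (1:ℝ) else 0) + (if (i : ℕ) = s - 1 then (-1:ℝ) else 0) := by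
    intro i
    simp only [Cmat, of_apply, Finset.sum_add_distrib, ite_and]
    congr 1
    · split
      · exact sum_ite_val 0 hs 1
      · simp
    · split
      · exact sum_ite_val (s-1) (by omega) (-1)
      · simp
  simp only [dotProduct, mulVec, one_mul, mul_one]
  simp only [hrow, Finset.sum_add_distrib, sum_ite_val 0 hs (1:ℝ),
    sum_ite_val (s-1) (by omega : s - 1 < s) (-1:ℝ)]
  ring

lemma ker_char {s : ℕ} (hs : 0 < s) (S : Matrix (Fin s) (Fin s) ℝ) (onev : Fin s → ℝ)
    (honev : onev = fun _ => (1:ℝ))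
    (hrank : S.rank = s - 1) (hone : S *ᵥ onev = 0) :
    ∀ x, S *ᵥ x = 0 → ∃ t : ℝ, x = t • onev := by
  have hone_ne : onev ≠ (0 : Fin s → ℝ) := by
    rw [honev]
    intro h
    have := congrFun h ⟨0, hs⟩
    simp at this
  have hspan_le : Submodule.span ℝ {onev} ≤ LinearMap.ker S.mulVecLin := by
    rw [Submodule.span_singleton_le_iff_mem]
    simpa [Matrix.mulVecLin] using hone
  have hrn : Module.finrank ℝ (LinearMap.range S.mulVecLin)
      + Module.finrank ℝ (LinearMap.ker S.mulVecLin) = s := by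
    simpa using LinearMap.finrank_range_add_finrank_ker S.mulVecLin
  have hrk : Module.finrank ℝ (LinearMap.range S.mulVecLin) = s - 1 := by
    rw [← Matrix.rank, hrank]
  have hker1 : Module.finrank ℝ (LinearMap.ker S.mulVecLin) = 1 := by omega
  have hspan1 : Module.finrank ℝ (Submodule.span ℝ {onev}) = 1 :=
    finrank_span_singleton hone_ne
  have heq : Submodule.span ℝ {onev} = LinearMap.ker S.mulVecLin :=
    Submodule.eq_of_le_of_finrank_le hspan_le (by omega)
  intro x hx
  have : x ∈ LinearMap.ker S.mulVecLin := by simpa [Matrix.mulVecLin] using hx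
  rw [← heq, Submodule.mem_span_singleton] at this
  obtain ⟨t, ht⟩ := this
  exact ⟨t, ht.symm⟩

/-- coercivity of the quadratic form of M_* under condition (M2) (Lemma 3.2). -/
theorem Mstar_coercive (s : ℕ) (M : Matrix (Fin s) (Fin s) ℝ)
    (h1 : (Mstar M + (Mstar M)ᵀ).PosSemidef)
    (h2 : (Mstar M + (Mstar M)ᵀ).rank = s - 1) :
    ∃ c > (0:ℝ), ∀ ξ : Fin s → ℝ,
      c * (∑ i : Fin s, ∑ j : Fin s, if i < j then (ξ i - ξ j) ^ 2 else 0)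
        ≤ ξ ⬝ᵥ (Mstar M).mulVec ξ := by
  rcases Nat.eq_zero_or_pos s with rfl | hs
  · exact ⟨1, one_pos, fun ξ => by simp⟩
  set A := Mstar M with hA
  set S := A + Aᵀ with hS
  set onev : Fin s → ℝ := fun _ => 1 with honev
  have hST : Sᵀ = S := by rw [hS, transpose_add, transpose_transpose, add_comm]
  have qtrans : ∀ x : Fin s → ℝ, x ⬝ᵥ Aᵀ *ᵥ x = x ⬝ᵥ A *ᵥ x := fun x => by
    rw [Matrix.dotProduct_mulVec, Matrix.vecMul_transpose, dotProduct_comm]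
  have hq1 : onev ⬝ᵥ A *ᵥ onev = 0 := by
    rw [hA, honev, Mstar, add_mulVec, ← mulVec_mulVec, Bmat_mulVec_one, mulVec_zero,
      dotProduct_add, dotProduct_zero, zero_add]
    exact one_dot_C s hs
  have hqS1 : onev ⬝ᵥ S *ᵥ onev = 0 := by
    rw [hS, add_mulVec, dotProduct_add, qtrans, hq1]
    ring
  have hSone : S *ᵥ onev = 0 :=
    (h1.dotProduct_mulVec_zero_iff onev).mp (by simpa using hqS1)
  have hker := ker_char hs S onev honev h2 hSone
  set J : Matrix (Fin s) (Fin s) ℝ := Matrix.of fun _ _ => 1 with hJ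
  have hJq : ∀ x : Fin s → ℝ, x ⬝ᵥ J *ᵥ x = (∑ i, x i)^2 := fun x => by
    simp only [hJ, dotProduct, mulVec, of_apply, one_mul]
    rw [← Finset.sum_mul, sq]
  set S' := S + ((s:ℝ)⁻¹) • J with hS'
  have hq' : ∀ x : Fin s → ℝ, x ⬝ᵥ S' *ᵥ x = x ⬝ᵥ S *ᵥ x + (s:ℝ)⁻¹ * (∑ i, x i)^2 :=
    fun x => by
      rw [hS', add_mulVec, dotProduct_add, smul_mulVec, dotProduct_smul,
        smul_eq_mul, hJq]
  have hscast : (0:ℝ) < (s:ℝ) := by exact_mod_cast hs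
  have hpos : ∀ x : Fin s → ℝ, x ≠ 0 → 0 < x ⬝ᵥ S' *ᵥ x := by
    intro x hx
    have h01 : 0 ≤ x ⬝ᵥ S *ᵥ x := by simpa using h1.dotProduct_mulVec_nonneg x
    rw [hq' x]
    rcases h01.lt_or_eq with h | h
    · have : (0:ℝ) ≤ (s:ℝ)⁻¹ * (∑ i, x i)^2 := by positivity
      linarith
    · have hx0 : S *ᵥ x = 0 := (h1.dotProduct_mulVec_zero_iff x).mp (by simpa using h.symm)
      obtain ⟨t, rfl⟩ := hker x hx0
      have ht : t ≠ 0 := by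
        intro h'
        apply hx
        simp [h']
      have hsum : (∑ i, (t • onev) i) = t * s := by
        simp [honev, Finset.sum_const, mul_comm]
      rw [← h, zero_add, hsum]
      have : t * (s:ℝ) ≠ 0 := mul_ne_zero ht (ne_of_gt hscast)
      positivity
  obtain ⟨c, hc, hcoer⟩ := coercive_of_pos hs S' hpos
  refine ⟨c / (2 * s), by positivity, fun ξ => ?_⟩
  set t := (∑ i, ξ i) / s with htdef
  set η : Fin s → ℝ := ξ - t • onev with hη
  have hξ : ξ = η + t • onev := by rw [hη]; abel
  have hηsum : ∑ i, η i = 0 := by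
    simp only [hη, honev, Pi.sub_apply, Pi.smul_apply, smul_eq_mul, mul_one,
      Finset.sum_sub_distrib, Finset.sum_const, Finset.card_univ, Fintype.card_fin,
      nsmul_eq_mul, htdef]
    field_simp
    ring
  have hT : (∑ i : Fin s, ∑ j : Fin s, if i < j then (ξ i - ξ j)^2 else 0)
      = s * (η ⬝ᵥ η) := by
    rw [← sum_pairs_eq η hηsum]
    refine Finset.sum_congr rfl fun i _ => Finset.sum_congr rfl fun j _ => ?_
    have hd : ξ i - ξ j = η i - η j := by
      simp only [hη, honev, Pi.sub_apply, Pi.smul_apply, smul_eq_mul, mul_one]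
      ring
    rw [hd]
  have hvm : onev ᵥ* S = 0 := by
    rw [← hST, Matrix.vecMul_transpose]
    exact hSone
  have hinv : ξ ⬝ᵥ S *ᵥ ξ = η ⬝ᵥ S *ᵥ η := by
    have hz : onev ⬝ᵥ S *ᵥ η = 0 := by
      rw [Matrix.dotProduct_mulVec, hvm, zero_dotProduct]
    rw [hξ, add_dotProduct, mulVec_add, dotProduct_add, dotProduct_add,
      mulVec_smul, hSone, smul_zero, dotProduct_zero, dotProduct_zero,
      smul_dotProduct, hz]
    simp
  have hQ : ξ ⬝ᵥ A *ᵥ ξ = (1/2) * (η ⬝ᵥ S' *ᵥ η) := by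
    have h1' : ξ ⬝ᵥ S *ᵥ ξ = 2 * (ξ ⬝ᵥ A *ᵥ ξ) := by
      rw [hS, add_mulVec, dotProduct_add, qtrans]
      ring
    have h2' : η ⬝ᵥ S' *ᵥ η = η ⬝ᵥ S *ᵥ η := by
      rw [hq' η, hηsum]
      simp
    rw [h2', ← hinv, h1']
    ring
  have hcη := hcoer η
  rw [hT, hQ]
  calc c / (2*s) * ((s:ℝ) * (η ⬝ᵥ η)) = (1/2) * (c * (η ⬝ᵥ η)) := by
        field_simp
    _ ≤ (1/2) * (η ⬝ᵥ S' *ᵥ η) := by linarith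
end
end

section
/- Let A be an s×s real lower triangular matrix whose first row is zero and whose submatrix Â = (a_{ij})_{2≤i,j≤s} is invertible (type CK), let v be a generator of the one-dimensional null space of A, and assume the last component of v is zero (condition (A)). Let M be an s×s matrix such that M A + (M A)ᵀ is positive semidefinite of rank s−1 (condition (M1)). Then there exists a constant c > 0 such that ξᵀ M A ξ ≥ c ξ_s² for every vector ξ = (ξ₁, …, ξ_s) ∈ ℝ^s. -/
noncomputable section

open Real Matrix

section Aux

lemma exists_factor_through {n : Type*} [Fintype n] [DecidableEq n]
    (T : (n → ℝ) →ₗ[ℝ] (n → ℝ)) (f : (n → ℝ) →ₗ[ℝ] ℝ)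
    (hker : LinearMap.ker T ≤ LinearMap.ker f) :
    ∃ g : (n → ℝ) →ₗ[ℝ] ℝ, ∀ x, g (T x) = f x := by
  obtain ⟨W, hW⟩ := Submodule.exists_isCompl (LinearMap.range T)
  refine ⟨(((LinearMap.ker T).liftQ f hker) ∘ₗ
      (T.quotKerEquivRange.symm : _ →ₗ[ℝ] _)) ∘ₗ
      Submodule.projectionOnto (LinearMap.range T) W hW, fun x => ?_⟩
  have h1 : Submodule.projectionOnto (LinearMap.range T) W hW (T x)
      = ⟨T x, LinearMap.mem_range_self T x⟩ := by
    simpa using Submodule.linearProjOfIsCompl_apply_left hW ⟨T x, LinearMap.mem_range_self T x⟩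
  have h2 : T.quotKerEquivRange.symm ⟨T x, LinearMap.mem_range_self T x⟩
      = (LinearMap.ker T).mkQ x := T.quotKerEquivRange_symm_apply_image x _
  rw [LinearMap.comp_apply, h1, LinearMap.comp_apply, LinearEquiv.coe_coe, h2,
    Submodule.mkQ_apply, Submodule.liftQ_apply]

end Aux

/-- coercivity of the quadratic form of M A under (M1) and (A) (Lemma 4.1). -/
theorem MA_coercive (s : ℕ) (A : Matrix (Fin s) (Fin s) ℝ) (hCK : TypeCK A)
    (v : Fin s → ℝ) (hv : NullGen A v)
    (hA : ∀ i : Fin s, (i : ℕ) = s - 1 → v i = 0)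
    (M : Matrix (Fin s) (Fin s) ℝ) (hM1 : CondM1 M A) :
    ∃ c > (0:ℝ), ∀ ξ : Fin s → ℝ, ∀ i : Fin s, (i : ℕ) = s - 1 →
      c * (ξ i) ^ 2 ≤ ξ ⬝ᵥ (M * A).mulVec ξ :=  by
  classical
  -- trivial case s = 0 : contradiction with v ≠ 0
  rcases Nat.eq_zero_or_pos s with hs0 | hs
  · subst hs0
    exact absurd (Subsingleton.elim v 0) hv.1
  set S := M * A + (M * A)ᵀ with hSdef
  have hPSD : S.PosSemidef := hM1.1
  have hSsymm : Sᵀ = S := by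
    simp only [hSdef, Matrix.transpose_add, Matrix.transpose_transpose]
    exact add_comm _ _
  have hsym : ∀ x y : Fin s → ℝ, x ⬝ᵥ S.mulVec y = y ⬝ᵥ S.mulVec x := by
    intro x y
    conv_lhs => rw [Matrix.dotProduct_mulVec, ← hSsymm, Matrix.vecMul_transpose,
      dotProduct_comm]
  have hnn : ∀ x : Fin s → ℝ, 0 ≤ x ⬝ᵥ S.mulVec x := by
    intro x; simpa using hPSD.dotProduct_mulVec_nonneg x
  have hzero : ∀ x : Fin s → ℝ, x ⬝ᵥ S.mulVec x = 0 → S.mulVec x = 0 := by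
    intro x hx
    have := (hPSD.dotProduct_mulVec_zero_iff x).mp (by simpa using hx)
    simpa using this
  -- v is in the kernel of S
  have hAv : A.mulVec v = 0 := hv.2.1
  have hMAv : (M * A).mulVec v = 0 := by
    rw [← Matrix.mulVec_mulVec, hAv, Matrix.mulVec_zero]
  have hvS : S.mulVec v = 0 := by
    apply hzero
    have h1 : v ⬝ᵥ (M * A).mulVec v = 0 := by rw [hMAv, dotProduct_zero]
    have h2 : v ⬝ᵥ (M * A)ᵀ.mulVec v = 0 := by
      rw [Matrix.dotProduct_mulVec, Matrix.vecMul_transpose, hMAv, zero_dotProduct]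
    rw [hSdef, Matrix.add_mulVec, dotProduct_add, h1, h2, add_zero]
  -- the kernel of S is exactly the span of v
  set T := S.mulVecLin with hTdef
  have hTapp : ∀ x, T x = S.mulVec x := fun x => rfl
  have hspan_le : (Submodule.span ℝ {v}) ≤ LinearMap.ker T := by
    rw [Submodule.span_singleton_le_iff_mem, LinearMap.mem_ker, hTapp]
    exact hvS
  have hrank : Module.finrank ℝ (LinearMap.range T) = s - 1 := hM1.2
  have hrn := LinearMap.finrank_range_add_finrank_ker T
  rw [hrank, Module.finrank_fintype_fun_eq_card, Fintype.card_fin] at hrn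
  have hkerdim : Module.finrank ℝ (LinearMap.ker T) = 1 := by omega
  have hspan_dim : Module.finrank ℝ (Submodule.span ℝ {v}) = 1 :=
    finrank_span_singleton hv.1
  have hker_eq : LinearMap.ker T = Submodule.span ℝ {v} :=
    (Submodule.eq_of_le_of_finrank_le hspan_le (by rw [hkerdim, hspan_dim])).symm
  -- the last-coordinate functional vanishes on ker T
  set last : Fin s := ⟨s - 1, by omega⟩ with hlast
  have hvlast : v last = 0 := hA last rfl
  have hker_le : LinearMap.ker T ≤ LinearMap.ker (LinearMap.proj (R := ℝ)
      (φ := fun _ : Fin s => ℝ) last) := by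
    intro x hx
    rw [hker_eq, Submodule.mem_span_singleton] at hx
    obtain ⟨t, rfl⟩ := hx
    simp [LinearMap.mem_ker, hvlast]
  obtain ⟨g, hg⟩ := exists_factor_through T _ hker_le
  have hg' : ∀ x : Fin s → ℝ, g (S.mulVec x) = x last := by
    intro x; rw [← hTapp]; exact hg x
  -- the vector u representing g
  set u : Fin s → ℝ := fun j => g (fun k => if j = k then 1 else 0) with hu
  have hgu : ∀ y : Fin s → ℝ, g y = u ⬝ᵥ y := by
    intro y
    conv_lhs => rw [pi_eq_sum_univ y]
    rw [map_sum]
    simp only [_root_.map_smul, smul_eq_mul]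
    rw [dotProduct]
    exact Finset.sum_congr rfl fun i _ => by rw [hu, mul_comm]
  have hkey : ∀ ξ : Fin s → ℝ, u ⬝ᵥ S.mulVec ξ = ξ last := by
    intro ξ; rw [← hgu]; exact hg' ξ
  -- Cauchy-Schwarz for the PSD form
  set qu : ℝ := u ⬝ᵥ S.mulVec u with hqu
  have hCS : ∀ ξ : Fin s → ℝ, (ξ last) ^ 2 ≤ qu * (ξ ⬝ᵥ S.mulVec ξ) := by
    intro ξ
    have hexp : ∀ t : ℝ, (ξ ⬝ᵥ S.mulVec ξ) * (t * t) + (2 * (u ⬝ᵥ S.mulVec ξ)) * t + qu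
        = (u + t • ξ) ⬝ᵥ S.mulVec (u + t • ξ) := by
      intro t
      rw [Matrix.mulVec_add, Matrix.mulVec_smul, dotProduct_add, add_dotProduct,
        add_dotProduct, dotProduct_smul, smul_dotProduct,
        smul_dotProduct, dotProduct_smul, hsym ξ u, hqu]
      simp only [smul_eq_mul]
      ring
    have hd := discrim_le_zero (a := ξ ⬝ᵥ S.mulVec ξ) (b := 2 * (u ⬝ᵥ S.mulVec ξ)) (c := qu)
      (fun t => by rw [hexp t]; exact hnn _)
    rw [discrim] at hd
    rw [← hkey ξ]
    nlinarith [hd]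
  -- conclude
  have hqu_nn : 0 ≤ qu := hnn u
  refine ⟨1 / (2 * (qu + 1)), by positivity, ?_⟩
  intro ξ i hi
  have hi' : i = last := Fin.ext (by rw [hi])
  subst hi'
  have hS2 : ξ ⬝ᵥ S.mulVec ξ = 2 * (ξ ⬝ᵥ (M * A).mulVec ξ) := by
    have htr : ξ ⬝ᵥ (M * A)ᵀ.mulVec ξ = ξ ⬝ᵥ (M * A).mulVec ξ := by
      rw [Matrix.dotProduct_mulVec, Matrix.vecMul_transpose, dotProduct_comm]
    rw [hSdef, Matrix.add_mulVec, dotProduct_add, htr]; ring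
  have h1 := hCS ξ
  have h2 := hnn ξ
  rw [hS2] at h1 h2
  have hpos : (0:ℝ) < 2 * (qu + 1) := by linarith
  calc 1 / (2 * (qu + 1)) * ξ last ^ 2 = ξ last ^ 2 / (2 * (qu + 1)) := by ring
    _ ≤ ξ ⬝ᵥ (M * A).mulVec ξ := by
        rw [div_le_iff₀ hpos]
        nlinarith [h1, h2]
end
end

section
/- Let A be an s×s real lower triangular matrix whose first row is zero and whose diagonal entries satisfy a_{ii} > 0 for i = 2,…,s. Then there exists a constant C > 0 such that for every μ > 0 the matrix I + μA is invertible, every entry of (I + μA)⁻¹ has absolute value at most C, and every entry of A (I + μA)⁻¹ has absolute value at most C/(1 + μ). -/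
noncomputable section

open Real Matrix

/-- uniform bounds on `(I + μA)⁻¹` and `A (I + μA)⁻¹` (Lemma 4.3, parts 1, 2). -/
theorem inv_bounds (s : ℕ) (A : Matrix (Fin s) (Fin s) ℝ)
    (hlow : LowerTri A) (hrow0 : ∀ i j : Fin s, (i : ℕ) = 0 → A i j = 0)
    (hdiag : ∀ i : Fin s, 1 ≤ (i : ℕ) → 0 < A i i) :
    ∃ C > (0:ℝ), ∀ μ : ℝ, 0 < μ →
      IsUnit (1 + μ • A) ∧
      (∀ i j : Fin s, |(1 + μ • A)⁻¹ i j| ≤ C) ∧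
      (∀ i j : Fin s, |(A * (1 + μ • A)⁻¹) i j| ≤ C / (1 + μ)) := by
  classical
  have hdiag0 : ∀ i : Fin s, 0 ≤ A i i := by
    intro i
    rcases Nat.eq_zero_or_pos i.1 with h | h
    · exact le_of_eq (hrow0 i i h).symm
    · exact (hdiag i h).le
  have hunit : ∀ μ : ℝ, 0 < μ → IsUnit (1 + μ • A) := by
    intro μ hμ
    rw [Matrix.isUnit_iff_isUnit_det]
    have htri : (1 + μ • A).BlockTriangular OrderDual.toDual := by
      intro i j hij
      have hij' : i < j := hij
      simp [Matrix.add_apply, Matrix.one_apply_ne (ne_of_lt hij'), hlow i j hij']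
    rw [Matrix.det_of_lowerTriangular _ htri]
    refine isUnit_iff_ne_zero.mpr (ne_of_gt (Finset.prod_pos ?_))
    intro i _
    have h1 : (1 + μ • A) i i = 1 + μ * A i i := by
      simp [Matrix.add_apply, Matrix.one_apply_eq]
    rw [h1]
    have := mul_nonneg hμ.le (hdiag0 i)
    linarith
  have hrow : ∀ μ : ℝ, 0 < μ → ∀ i j : Fin s,
      (1 + μ * A i i) * (1 + μ • A)⁻¹ i j
        = (if i = j then (1:ℝ) else 0)
          - μ * ∑ k ∈ Finset.univ.filter (fun k => k < i), A i k * (1 + μ • A)⁻¹ k j := by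
    intro μ hμ i j
    have h1 : (1 + μ • A) * (1 + μ • A)⁻¹ = 1 :=
      Matrix.mul_nonsing_inv _ ((Matrix.isUnit_iff_isUnit_det _).mp (hunit μ hμ))
    have h2 := congrFun (congrFun h1 i) j
    rw [Matrix.mul_apply, Matrix.one_apply] at h2
    simp only [Matrix.add_apply, Matrix.one_apply, Matrix.smul_apply, smul_eq_mul,
      add_mul, ite_mul, one_mul, zero_mul, Finset.sum_add_distrib, Finset.sum_ite_eq,
      Finset.mem_univ, if_true, mul_assoc] at h2
    rw [← Finset.mul_sum] at h2
    have hsplit : (∑ k, A i k * (1 + μ • A)⁻¹ k j)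
        = (∑ k ∈ Finset.univ.filter (fun k => k < i), A i k * (1 + μ • A)⁻¹ k j)
          + A i i * (1 + μ • A)⁻¹ i j := by
      rw [← Finset.sum_filter_add_sum_filter_not Finset.univ (fun k => k < i)
        (fun k => A i k * (1 + μ • A)⁻¹ k j)]
      congr 1
      refine Finset.sum_eq_single_of_mem i (by simp) ?_
      intro k hk hki
      have hk' : ¬ k < i := (Finset.mem_filter.mp hk).2
      have : i < k := lt_of_le_of_ne (not_lt.mp hk') (Ne.symm hki)
      rw [hlow i k this, zero_mul]
    rw [hsplit] at h2
    linear_combination h2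
  have hQ : ∀ n : ℕ, ∃ K : ℝ, 1 ≤ K ∧ ∀ μ : ℝ, 0 < μ → ∀ i : Fin s, (i : ℕ) ≤ n →
      ∀ j : Fin s, |(1 + μ • A)⁻¹ i j| ≤ K := by
    intro n
    induction n with
    | zero =>
      refine ⟨1, le_refl 1, ?_⟩
      intro μ hμ i hi j
      have h0 : (i : ℕ) = 0 := Nat.le_zero.mp hi
      have heq := hrow μ hμ i j
      rw [hrow0 i i h0] at heq
      have hz : (∑ k ∈ Finset.univ.filter (fun k => k < i), A i k * (1 + μ • A)⁻¹ k j) = 0 :=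
        Finset.sum_eq_zero (fun k _ => by rw [hrow0 i k h0, zero_mul])
      rw [hz] at heq
      have hB : (1 + μ • A)⁻¹ i j = if i = j then (1:ℝ) else 0 := by
        split at heq <;> split <;> first | linarith | simp_all
      rw [hB]
      split <;> simp
    | succ n ih =>
      obtain ⟨K, hK1, hK⟩ := ih
      by_cases hs : n + 1 < s
      · set i0 : Fin s := ⟨n + 1, hs⟩ with hi0
        have ha : 0 < A i0 i0 := hdiag i0 (by simp [hi0])
        set S : ℝ := (∑ k, |A i0 k|) * K with hS
        have hS0 : 0 ≤ S :=
          mul_nonneg (Finset.sum_nonneg fun k _ => abs_nonneg _) (by linarith)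
        refine ⟨max K (1 + S / A i0 i0), le_trans hK1 (le_max_left _ _), ?_⟩
        intro μ hμ i hi j
        rcases Nat.lt_or_ge (i : ℕ) (n + 1) with h | h
        · exact le_trans (hK μ hμ i (Nat.lt_succ_iff.mp h) j) (le_max_left _ _)
        · have hieq : i = i0 := Fin.ext (le_antisymm hi h)
          rw [hieq]
          have heq := hrow μ hμ i0 j
          have habs : |∑ k ∈ Finset.univ.filter (fun k => k < i0),
              A i0 k * (1 + μ • A)⁻¹ k j| ≤ S := by
            calc |∑ k ∈ Finset.univ.filter (fun k => k < i0), A i0 k * (1 + μ • A)⁻¹ k j|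
                ≤ ∑ k ∈ Finset.univ.filter (fun k => k < i0), |A i0 k * (1 + μ • A)⁻¹ k j| :=
                  Finset.abs_sum_le_sum_abs _ _
              _ ≤ ∑ k ∈ Finset.univ.filter (fun k => k < i0), |A i0 k| * K := by
                  refine Finset.sum_le_sum ?_
                  intro k hk
                  rw [abs_mul]
                  refine mul_le_mul_of_nonneg_left ?_ (abs_nonneg _)
                  have hki : k < i0 := (Finset.mem_filter.mp hk).2
                  refine hK μ hμ k ?_ j
                  have : (k : ℕ) < n + 1 := hki
                  omega
              _ ≤ ∑ k, |A i0 k| * K := by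
                  refine Finset.sum_le_sum_of_subset_of_nonneg (Finset.filter_subset _ _) ?_
                  intro k _ _
                  exact mul_nonneg (abs_nonneg _) (by linarith)
              _ = S := by rw [hS, Finset.sum_mul]
          have h1a : 0 < 1 + μ * A i0 i0 := by nlinarith [mul_pos hμ ha]
          have hBabs : |(1 + μ • A)⁻¹ i0 j| * (1 + μ * A i0 i0) ≤ 1 + μ * S := by
            rw [mul_comm, ← abs_of_pos h1a, ← abs_mul, heq]
            have h3 : |(if i0 = j then (1:ℝ) else 0)| ≤ 1 := by split <;> simp
            calc |(if i0 = j then (1:ℝ) else 0) - μ * ∑ k ∈ Finset.univ.filter (fun k => k < i0),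
                  A i0 k * (1 + μ • A)⁻¹ k j|
                ≤ |(if i0 = j then (1:ℝ) else 0)| + |μ * ∑ k ∈ Finset.univ.filter (fun k => k < i0),
                  A i0 k * (1 + μ • A)⁻¹ k j| := abs_sub _ _
              _ ≤ 1 + μ * S := by
                  rw [abs_mul, abs_of_pos hμ]
                  have := mul_le_mul_of_nonneg_left habs hμ.le
                  linarith
          have hfrac : 1 + μ * S ≤ (1 + S / A i0 i0) * (1 + μ * A i0 i0) := by
            have hc : S / A i0 i0 * A i0 i0 = S := div_mul_cancel₀ S ha.ne'
            have hd : 0 ≤ S / A i0 i0 := div_nonneg hS0 ha.le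
            nlinarith [mul_pos hμ ha]
          have hfin : |(1 + μ • A)⁻¹ i0 j| ≤ 1 + S / A i0 i0 :=
            le_of_mul_le_mul_right (le_trans hBabs hfrac) h1a
          exact le_trans hfin (le_max_right _ _)
      · exact ⟨K, hK1, fun μ hμ i _ j => hK μ hμ i (by have := i.isLt; omega) j⟩
  obtain ⟨K, hK1, hK⟩ := hQ s
  have hKall : ∀ μ : ℝ, 0 < μ → ∀ i j : Fin s, |(1 + μ • A)⁻¹ i j| ≤ K :=
    fun μ hμ i j => hK μ hμ i i.isLt.le j
  set T : ℝ := ∑ i, ∑ k, |A i k| with hT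
  have hT0 : 0 ≤ T :=
    Finset.sum_nonneg fun i _ => Finset.sum_nonneg fun k _ => abs_nonneg _
  have hTK0 : 0 ≤ T * K := mul_nonneg hT0 (by linarith)
  refine ⟨2 + 2 * K + 2 * (T * K), by linarith, ?_⟩
  intro μ hμ
  refine ⟨hunit μ hμ, fun i j => by linarith [hKall μ hμ i j], ?_⟩
  intro i j
  have hμ1 : (0:ℝ) < 1 + μ := by linarith
  rw [le_div_iff₀ hμ1]
  have hX : (A * (1 + μ • A)⁻¹) i j = ∑ k, A i k * (1 + μ • A)⁻¹ k j := Matrix.mul_apply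
  have hc1 : |(A * (1 + μ • A)⁻¹) i j| ≤ T * K := by
    rw [hX]
    calc |∑ k, A i k * (1 + μ • A)⁻¹ k j| ≤ ∑ k, |A i k * (1 + μ • A)⁻¹ k j| :=
          Finset.abs_sum_le_sum_abs _ _
      _ ≤ ∑ k, |A i k| * K := by
          refine Finset.sum_le_sum ?_
          intro k _
          rw [abs_mul]
          exact mul_le_mul_of_nonneg_left (hKall μ hμ k j) (abs_nonneg _)
      _ = (∑ k, |A i k|) * K := by rw [Finset.sum_mul]
      _ ≤ T * K := by
          refine mul_le_mul_of_nonneg_right ?_ (by linarith)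
          exact Finset.single_le_sum (f := fun i => ∑ k, |A i k|)
            (fun i _ => Finset.sum_nonneg fun k _ => abs_nonneg _) (Finset.mem_univ i)
  have hc2 : μ * |(A * (1 + μ • A)⁻¹) i j| ≤ 1 + K := by
    have h1 : (1 + μ • A) * (1 + μ • A)⁻¹ = 1 :=
      Matrix.mul_nonsing_inv _ ((Matrix.isUnit_iff_isUnit_det _).mp (hunit μ hμ))
    have h2 : (1 + μ • A)⁻¹ + μ • (A * (1 + μ • A)⁻¹) = 1 := by
      rw [Matrix.add_mul, Matrix.one_mul, Matrix.smul_mul] at h1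
      exact h1
    have h3 := congrFun (congrFun h2 i) j
    simp only [Matrix.add_apply, Matrix.smul_apply, smul_eq_mul, Matrix.one_apply] at h3
    have h4 : μ * (A * (1 + μ • A)⁻¹) i j
        = (if i = j then (1:ℝ) else 0) - (1 + μ • A)⁻¹ i j := by
      split at h3 <;> split <;> first | linarith | simp_all
    have habseq : |μ * (A * (1 + μ • A)⁻¹) i j| = μ * |(A * (1 + μ • A)⁻¹) i j| := by
      rw [abs_mul, abs_of_pos hμ]
    rw [← habseq, h4]
    have h5 : |(if i = j then (1:ℝ) else 0)| ≤ 1 := by split <;> simp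
    calc |(if i = j then (1:ℝ) else 0) - (1 + μ • A)⁻¹ i j|
        ≤ |(if i = j then (1:ℝ) else 0)| + |(1 + μ • A)⁻¹ i j| := abs_sub _ _
      _ ≤ 1 + K := by linarith [hKall μ hμ i j]
  have hXnn : 0 ≤ |(A * (1 + μ • A)⁻¹) i j| := abs_nonneg _
  rcases le_or_gt μ 1 with h | h
  · nlinarith
  · nlinarith [mul_le_mul_of_nonneg_left h.le hXnn]
end
end

section
/- Let A be an s×s real lower triangular matrix whose first row is zero and whose diagonal entries satisfy a_{ii} > 0 for i = 2,…,s (so that the submatrix Â = (a_{ij})_{2≤i,j≤s} is invertible and the null space of A is one-dimensional, spanned by some v). Assume condition (A): the last component of v is zero. Then there exists a constant C > 0 such that for every μ > 0 and every i = 1,…,s−1, the (s,i) entry of A (I + μA)⁻¹ has absolute value at most C/(1 + μ)². -/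
noncomputable section

open Real Matrix

namespace InvBoundsAux

open Matrix

lemma det_lowerTri {s : ℕ} (M : Matrix (Fin s) (Fin s) ℝ) (h : LowerTri M) :
    M.det = ∏ i, M i i :=
  Matrix.det_of_lowerTriangular M (fun i j hij => h i j hij)

lemma kern_zero {s : ℕ} (A : Matrix (Fin s) (Fin s) ℝ) (hlow : LowerTri A)
    (hdiag : ∀ i : Fin s, 1 ≤ (i : ℕ) → 0 < A i i) (x : Fin s → ℝ)
    (hx : A.mulVec x = 0) (h0 : ∀ i : Fin s, (i : ℕ) = 0 → x i = 0) : x = 0 := by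
  have key : ∀ n : ℕ, ∀ i : Fin s, (i : ℕ) = n → x i = 0 := by
    intro n
    induction n using Nat.strong_induction_on with
    | _ n ih =>
      intro i hi
      rcases Nat.eq_zero_or_pos n with h | h
      · exact h0 i (by omega)
      · have hrow : ∑ j, A i j * x j = 0 := by
          have := congrFun hx i
          simpa [Matrix.mulVec, dotProduct] using this
        have hsingle : ∑ j, A i j * x j = A i i * x i := by
          apply Finset.sum_eq_single
          · intro j _ hji
            rcases lt_or_gt_of_ne hji with hlt | hgt
            · have hj : (j : ℕ) < n := hi ▸ (Fin.lt_def.mp hlt)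
              rw [ih j.1 hj j rfl, mul_zero]
            · rw [hlow i j hgt, zero_mul]
          · intro hi'; exact absurd (Finset.mem_univ i) hi'
        have hAii := hdiag i (by omega)
        have hz : A i i * x i = 0 := by rw [← hsingle]; exact hrow
        exact (mul_eq_zero.mp hz).resolve_left (ne_of_gt hAii)
  funext i; exact key i.1 i rfl

lemma bounded_on_compact {s : ℕ} (A : Matrix (Fin s) (Fin s) ℝ)
    (hdet : ∀ μ : ℝ, 0 ≤ μ → (1 + μ • A).det ≠ 0) (μ₀ : ℝ) :
    ∃ C : ℝ, ∀ μ ∈ Set.Icc (0:ℝ) μ₀, ∀ i j : Fin s, |(A * (1 + μ • A)⁻¹) i j| ≤ C := by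
  have hF : Continuous fun μ : ℝ => 1 + μ • A :=
    continuous_const.add (continuous_id.smul continuous_const)
  have hinv : ∀ k j : Fin s, ContinuousOn (fun μ : ℝ => (1 + μ • A)⁻¹ k j)
      (Set.Icc (0:ℝ) μ₀) := by
    intro k j
    have heq : ∀ μ : ℝ, (1 + μ • A)⁻¹ k j
        = ((1 + μ • A).det)⁻¹ * (1 + μ • A).adjugate k j := by
      intro μ
      rw [Matrix.inv_def, Ring.inverse_eq_inv']
      simp
    simp only [heq]
    exact (hF.matrix_det.continuousOn.inv₀ (fun μ hμ => hdet μ hμ.1)).mul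
      ((hF.matrix_adjugate.matrix_elem k j).continuousOn)
  have hentry : ∀ i j : Fin s, ContinuousOn (fun μ : ℝ => (A * (1 + μ • A)⁻¹) i j)
      (Set.Icc (0:ℝ) μ₀) := by
    intro i j
    have heq : ∀ μ : ℝ, (A * (1 + μ • A)⁻¹) i j = ∑ k, A i k * (1 + μ • A)⁻¹ k j := by
      intro μ; rw [Matrix.mul_apply]
    simp only [heq]
    exact continuousOn_finset_sum _ (fun k _ => continuousOn_const.mul (hinv k j))
  have hg : ContinuousOn (fun μ : ℝ => ∑ i, ∑ j, |(A * (1 + μ • A)⁻¹) i j|)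
      (Set.Icc (0:ℝ) μ₀) :=
    continuousOn_finset_sum _ (fun i _ => continuousOn_finset_sum _
      (fun j _ => (hentry i j).abs))
  obtain ⟨C, hC⟩ := (isCompact_Icc).exists_bound_of_continuousOn hg
  refine ⟨C, fun μ hμ i j => ?_⟩
  have h1 : |(A * (1 + μ • A)⁻¹) i j| ≤ ∑ j', |(A * (1 + μ • A)⁻¹) i j'| :=
    Finset.single_le_sum (f := fun j' => |(A * (1 + μ • A)⁻¹) i j'|)
      (fun k _ => abs_nonneg _) (Finset.mem_univ j)
  have h2 : ∑ j', |(A * (1 + μ • A)⁻¹) i j'|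
      ≤ ∑ i', ∑ j', |(A * (1 + μ • A)⁻¹) i' j'| :=
    Finset.single_le_sum (f := fun i' => ∑ j', |(A * (1 + μ • A)⁻¹) i' j'|)
      (fun k _ => Finset.sum_nonneg (fun _ _ => abs_nonneg _)) (Finset.mem_univ i)
  have h3 := hC μ hμ
  rw [Real.norm_eq_abs] at h3
  linarith [le_abs_self (∑ i', ∑ j', |(A * (1 + μ • A)⁻¹) i' j'|)]

lemma final_bound (x ρ β μ R : ℝ) (hx : 0 ≤ x) (hρ0 : 0 ≤ ρ) (hβ1 : 1 ≤ β)
    (hμ : 2 * β + 2 ≤ μ) (hρμ : ρ * μ ≤ 2) (h9 : μ * x ≤ ρ * β)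
    (hR : 8 * β ≤ R) : x * (1 + μ) ^ 2 ≤ R := by
  have hμ4 : 4 ≤ μ := by linarith
  have h11 : μ * (μ * x) ≤ μ * (ρ * β) := mul_le_mul_of_nonneg_left h9 (by linarith)
  have h12 : μ * (ρ * β) ≤ 2 * β := by
    have h := mul_le_mul_of_nonneg_right hρμ (by linarith : (0:ℝ) ≤ β)
    nlinarith
  have h13 : x * μ ^ 2 ≤ 2 * β := by nlinarith
  have h14 : (1 + μ) ^ 2 ≤ 4 * μ ^ 2 := by nlinarith
  have h16 : x * (1 + μ) ^ 2 ≤ x * (4 * μ ^ 2) := mul_le_mul_of_nonneg_left h14 hx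
  nlinarith

end InvBoundsAux

/-- refined bound on the (s,i) entries, i ≤ s−1, of `A (I + μA)⁻¹` under
condition (A) (Lemma 4.3, part 3). -/
theorem inv_bounds_last_row (s : ℕ) (A : Matrix (Fin s) (Fin s) ℝ)
    (hlow : LowerTri A) (hrow0 : ∀ i j : Fin s, (i : ℕ) = 0 → A i j = 0)
    (hdiag : ∀ i : Fin s, 1 ≤ (i : ℕ) → 0 < A i i)
    (v : Fin s → ℝ) (hv : NullGen A v)
    (hA : ∀ i : Fin s, (i : ℕ) = s - 1 → v i = 0) :
    ∃ C > (0:ℝ), ∀ μ : ℝ, 0 < μ →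
      ∀ i j : Fin s, (i : ℕ) = s - 1 → (j : ℕ) < s - 1 →
        |(A * (1 + μ • A)⁻¹) i j| ≤ C / (1 + μ) ^ 2 := by
  classical
  rcases Nat.eq_zero_or_pos s with hs0 | hs
  · refine ⟨1, one_pos, fun μ _ i => ?_⟩
    subst hs0; exact i.elim0
  haveI : Nonempty (Fin s) := ⟨⟨0, hs⟩⟩
  set z : Fin s := ⟨0, hs⟩ with hzdef
  set e : Fin s := ⟨s - 1, by omega⟩ with hedef
  have hvz : v z ≠ 0 := by
    intro h
    apply hv.1
    refine InvBoundsAux.kern_zero A hlow hdiag v hv.2.1 (fun i hi => ?_)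
    have hiz : i = z := Fin.ext (by simpa using hi)
    rwa [hiz]
  have hve : v e = 0 := hA e (by simp [hedef])
  set E : Matrix (Fin s) (Fin s) ℝ :=
    Matrix.of (fun i j => if i = z ∧ j = z then (1:ℝ) else 0) with hEdef
  set D : Matrix (Fin s) (Fin s) ℝ := A + E with hDdef
  set P : Matrix (Fin s) (Fin s) ℝ :=
    Matrix.of (fun i j => (v z)⁻¹ * v i * (if j = z then (1:ℝ) else 0)) with hPdef
  have hAz : ∀ j, A z j = 0 := fun j => hrow0 z j rfl
  have hAP : A * P = 0 := by
    ext i j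
    simp only [Matrix.mul_apply, hPdef, Matrix.of_apply, Matrix.zero_apply]
    by_cases hj : j = z
    · subst hj
      have hmv : ∑ k, A i k * v k = 0 := by
        have := congrFun hv.2.1 i
        simpa [Matrix.mulVec, dotProduct] using this
      have hstep : ∀ k : Fin s, A i k * ((v z)⁻¹ * v k * if z = z then (1:ℝ) else 0)
          = (v z)⁻¹ * (A i k * v k) := by
        intro k; rw [if_pos rfl]; ring
      rw [Finset.sum_congr rfl (fun k _ => hstep k), ← Finset.mul_sum, hmv, mul_zero]
    · simp [hj]
  have hlowE : LowerTri E := by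
    intro i j hij
    simp only [hEdef, Matrix.of_apply, ite_eq_right_iff]
    rintro ⟨rfl, rfl⟩
    exact absurd hij (lt_irrefl _)
  have hlowD : LowerTri D := fun i j hij => by
    simp [hDdef, hlow i j hij, hlowE i j hij]
  have hne_z : ∀ i : Fin s, i ≠ z → 1 ≤ (i : ℕ) := by
    intro i hi
    rcases Nat.eq_zero_or_pos (i : ℕ) with h | h
    · exact absurd (Fin.ext (by simpa using h) : i = z) hi
    · omega
  have hDdiag : ∀ i, 0 < D i i := by
    intro i
    by_cases hi : i = z
    · subst hi
      simp [hDdef, hEdef, hAz]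
    · have := hdiag i (hne_z i hi)
      have hE0 : E i i = 0 := by simp [hEdef, hi]
      simp only [hDdef, Matrix.add_apply, hE0, add_zero]
      exact this
  have hdetD : IsUnit D.det := by
    rw [InvBoundsAux.det_lowerTri D hlowD]
    exact isUnit_iff_ne_zero.mpr (ne_of_gt (Finset.prod_pos (fun i _ => hDdiag i)))
  have hD1 : D * D⁻¹ = 1 := Matrix.mul_nonsing_inv D hdetD
  have hED : E * D = E := by
    ext i j
    simp only [Matrix.mul_apply, hEdef, Matrix.of_apply]
    by_cases hi : i = z
    · subst hi
      rw [Finset.sum_eq_single z]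
      · simp [hDdef, hEdef, hAz]
      · intro k _ hk
        simp [hk, Ne.symm hk]
      · intro h; exact absurd (Finset.mem_univ z) h
    · simp [hi]
  have hEDi : E * D⁻¹ = E := by
    calc E * D⁻¹ = (E * D) * D⁻¹ := by rw [hED]
      _ = E * (D * D⁻¹) := by rw [Matrix.mul_assoc]
      _ = E := by rw [hD1, Matrix.mul_one]
  have hEP : E * (1 - P) = 0 := by
    ext i j
    simp only [Matrix.mul_apply, hEdef, Matrix.of_apply, Matrix.zero_apply]
    by_cases hi : i = z
    · subst hi
      rw [Finset.sum_eq_single z]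
      · by_cases hj : j = z
        · subst hj
          simp [hPdef, Matrix.one_apply, Matrix.sub_apply, inv_mul_cancel₀ hvz]
        · simp [hPdef, Matrix.one_apply, Matrix.sub_apply, hj, Ne.symm hj]
      · intro k _ hk
        simp [hk, Ne.symm hk]
      · intro h; exact absurd (Finset.mem_univ z) h
    · simp [hi]
  set B : Matrix (Fin s) (Fin s) ℝ := D⁻¹ * (1 - P) with hBdef
  have hAeq : A = D - E := by rw [hDdef]; abel
  have hAB : A * B = 1 - P := by
    calc A * B = (D - E) * (D⁻¹ * (1 - P)) := by rw [← hAeq, hBdef]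
      _ = D * (D⁻¹ * (1 - P)) - E * (D⁻¹ * (1 - P)) := by rw [Matrix.sub_mul]
      _ = (D * D⁻¹) * (1 - P) - (E * D⁻¹) * (1 - P) := by
            rw [Matrix.mul_assoc, Matrix.mul_assoc]
      _ = 1 - P := by rw [hD1, hEDi, hEP, Matrix.one_mul, sub_zero]
  set β : ℝ := (∑ j, ∑ k, |B k j|) + 1 with hβdef
  have hβ1 : 1 ≤ β := by
    have h0 : 0 ≤ ∑ j, ∑ k, |B k j| :=
      Finset.sum_nonneg (fun _ _ => Finset.sum_nonneg (fun _ _ => abs_nonneg _))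
    simp only [hβdef]; linarith
  have hβcol : ∀ j : Fin s, ∑ k, |B k j| ≤ β := by
    intro j
    have h0 : ∑ k, |B k j| ≤ ∑ j', ∑ k, |B k j'| :=
      Finset.single_le_sum (f := fun j' => ∑ k, |B k j'|)
        (fun _ _ => Finset.sum_nonneg (fun _ _ => abs_nonneg _)) (Finset.mem_univ j)
    simp only [hβdef]; linarith
  set μ₀ : ℝ := 2 * β + 2 with hμ₀def
  have hμ₀pos : 0 < μ₀ := by simp only [hμ₀def]; linarith
  have hdet : ∀ μ : ℝ, 0 ≤ μ → (1 + μ • A).det ≠ 0 := by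
    intro μ hμ
    have hl : LowerTri (1 + μ • A) := by
      intro i j hij
      have hne : i ≠ j := ne_of_lt hij
      simp [Matrix.add_apply, Matrix.one_apply_ne hne, hlow i j hij]
    rw [InvBoundsAux.det_lowerTri _ hl]
    apply ne_of_gt
    apply Finset.prod_pos
    intro i _
    have hii : (1 + μ • A) i i = 1 + μ * A i i := by
      simp [Matrix.add_apply, Matrix.one_apply]
    rw [hii]
    by_cases hi : i = z
    · subst hi; rw [hAz z]; norm_num
    · have := hdiag i (hne_z i hi)
      nlinarith
  obtain ⟨C₀, hC₀⟩ := InvBoundsAux.bounded_on_compact A hdet μ₀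
  have hC₀0 : 0 ≤ C₀ := le_trans (abs_nonneg _)
    (hC₀ 0 ⟨le_refl 0, le_of_lt hμ₀pos⟩ z z)
  refine ⟨max (8 * β) ((C₀ + 1) * (1 + μ₀) ^ 2), ?_, ?_⟩
  · exact lt_of_lt_of_le (by linarith : (0:ℝ) < 8 * β) (le_max_left _ _)
  intro μ hμ i j hi hj
  have hie : i = e := Fin.ext (by simp [hedef, hi])
  subst hie
  have hje : j ≠ e := by
    intro h
    rw [h] at hj
    simp [hedef] at hj
  have h1μ2 : (0:ℝ) < (1 + μ) ^ 2 := by nlinarith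
  by_cases hcase : μ ≤ μ₀
  · have h1 := hC₀ μ ⟨le_of_lt hμ, hcase⟩ e j
    have h2 : (1 + μ) ^ 2 ≤ (1 + μ₀) ^ 2 := by nlinarith
    rw [le_div_iff₀ h1μ2]
    have h3 : (C₀ + 1) * (1 + μ₀) ^ 2 ≤ max (8 * β) ((C₀ + 1) * (1 + μ₀) ^ 2) :=
      le_max_right _ _
    nlinarith [mul_le_mul h1 h2 (le_of_lt h1μ2) hC₀0, sq_nonneg (1 + μ₀),
      abs_nonneg ((A * (1 + μ • A)⁻¹) e j)]
  · have hμbig : μ₀ < μ := not_le.mp hcase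
    have hdu : IsUnit (1 + μ • A).det := isUnit_iff_ne_zero.mpr (hdet μ (le_of_lt hμ))
    set Q : Matrix (Fin s) (Fin s) ℝ := (1 + μ • A)⁻¹ with hQdef
    have hQ1 : (1 + μ • A) * Q = 1 := Matrix.mul_nonsing_inv _ hdu
    have hQ2 : Q * (1 + μ • A) = 1 := Matrix.nonsing_inv_mul _ hdu
    set M : Matrix (Fin s) (Fin s) ℝ := A * Q with hMdef
    have hswap : A * (1 + μ • A) = (1 + μ • A) * A := by
      rw [Matrix.mul_add, Matrix.add_mul, Matrix.mul_one, Matrix.one_mul,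
        Matrix.mul_smul, Matrix.smul_mul]
    have hcomm : Q * A = M := by
      have h1 : Q * (A * ((1 + μ • A) * Q)) = Q * A := by rw [hQ1, Matrix.mul_one]
      have h2 : Q * (A * ((1 + μ • A) * Q)) = A * Q := by
        rw [← Matrix.mul_assoc A, hswap, Matrix.mul_assoc, ← Matrix.mul_assoc Q, hQ2,
          Matrix.one_mul]
      rw [← h1, h2, hMdef]
    have hQP : Q * P = P := by
      have h1 : (1 + μ • A) * P = P := by
        rw [Matrix.add_mul, Matrix.one_mul, Matrix.smul_mul, hAP, smul_zero, add_zero]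
      calc Q * P = Q * ((1 + μ • A) * P) := by rw [h1]
        _ = (Q * (1 + μ • A)) * P := by rw [Matrix.mul_assoc]
        _ = P := by rw [hQ2, Matrix.one_mul]
    have hkey : μ • M = 1 - P - M * B := by
      have h2 := hQ1
      rw [Matrix.add_mul, Matrix.one_mul, Matrix.smul_mul] at h2
      have h1 : μ • M = 1 - Q := by
        rw [add_comm] at h2; exact eq_sub_of_add_eq h2
      have h4 : Q * (1 - P) = Q - P := by rw [Matrix.mul_sub, Matrix.mul_one, hQP]
      have h5 : Q * (1 - P) = M * B := by
        rw [← hAB, ← Matrix.mul_assoc, hcomm]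
      have h3 : Q = P + M * B := by
        rw [h5] at h4
        rw [h4]; abel
      rw [h1, h3]; abel
    have hrow : ∀ j' : Fin s,
        μ * M e j' = (if e = j' then (1:ℝ) else 0) - (∑ k, M e k * B k j') := by
      intro j'
      have hPe : P e j' = 0 := by simp [hPdef, hve]
      have h6 : (μ • M) e j' = (1 - P - M * B) e j' := by rw [hkey]
      simpa [Matrix.sub_apply, Matrix.smul_apply, smul_eq_mul, Matrix.one_apply, hPe,
        Matrix.mul_apply] using h6
    set ρ : ℝ := Finset.univ.sup' Finset.univ_nonempty (fun k => |M e k|) with hρdef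
    have hρle : ∀ k, |M e k| ≤ ρ := by
      intro k
      rw [hρdef]
      exact Finset.le_sup' (fun k => |M e k|) (Finset.mem_univ k)
    have hρ0 : 0 ≤ ρ := le_trans (abs_nonneg _) (hρle z)
    have hsumb : ∀ j' : Fin s, |∑ k, M e k * B k j'| ≤ ρ * β := by
      intro j'
      calc |∑ k, M e k * B k j'| ≤ ∑ k, |M e k * B k j'| :=
            Finset.abs_sum_le_sum_abs _ _
        _ = ∑ k, |M e k| * |B k j'| := by simp [abs_mul]
        _ ≤ ∑ k, ρ * |B k j'| := Finset.sum_le_sum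
            (fun k _ => mul_le_mul_of_nonneg_right (hρle k) (abs_nonneg _))
        _ = ρ * ∑ k, |B k j'| := by rw [Finset.mul_sum]
        _ ≤ ρ * β := mul_le_mul_of_nonneg_left (hβcol j') hρ0
    have hρbound : ρ * μ ≤ 2 := by
      have hsup : ρ ≤ (1 + ρ * β) / μ := by
        apply Finset.sup'_le
        intro k _
        have h7 := hrow k
        have h8 : |μ * M e k| ≤ 1 + ρ * β := by
          rw [h7]
          calc |(if e = k then (1:ℝ) else 0) - ∑ k', M e k' * B k' k|
              ≤ |(if e = k then (1:ℝ) else 0)| + |∑ k', M e k' * B k' k| :=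
                abs_sub _ _
            _ ≤ 1 + ρ * β := add_le_add (by split <;> simp) (hsumb k)
        rw [abs_mul, abs_of_pos hμ] at h8
        rw [le_div_iff₀ hμ]
        calc |M e k| * μ = μ * |M e k| := mul_comm _ _
          _ ≤ 1 + ρ * β := h8
      have hsup' : ρ * μ ≤ 1 + ρ * β := (le_div_iff₀ hμ).mp hsup
      nlinarith [mul_nonneg hρ0 (by linarith : (0:ℝ) ≤ μ - 2 * β - 2)]
    have h9 : μ * |M e j| ≤ ρ * β := by
      have h8 := hrow j
      rw [if_neg (fun h => hje h.symm)] at h8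
      have h10 : |μ * M e j| ≤ ρ * β := by
        rw [h8]; simpa using hsumb j
      rwa [abs_mul, abs_of_pos hμ] at h10
    rw [le_div_iff₀ h1μ2]
    have hμle : 2 * β + 2 ≤ μ := by
      rw [hμ₀def] at hμbig; exact le_of_lt hμbig
    exact InvBoundsAux.final_bound _ ρ β μ _ (abs_nonneg _) hρ0 hβ1 hμle hρbound h9
      (le_max_left _ _)
end
end

section
/- Let A be an s×s real lower triangular matrix whose first row is zero and whose submatrix Â = (a_{ij})_{2≤i,j≤s} is invertible (type CK), let v be a generator of the one-dimensional null space of A, and let M be any s×s real matrix. Then: (i) the matrix M A + (M A)ᵀ is not positive definite; (ii) if M A + (M A)ᵀ is positive semidefinite of rank s−1, then (Mᵀ v)ᵢ = 0 for all i = 2,…,s; (iii) conversely, if (Mᵀ v)ᵢ = 0 for all i = 2,…,s, then (M A + (M A)ᵀ) v = 0, so 0 is an eigenvalue of M A + (M A)ᵀ. -/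
noncomputable section

open Real Matrix

lemma key {s : ℕ} (A : Matrix (Fin s) (Fin s) ℝ) (hCK : TypeCK A)
    (w : Fin s → ℝ) (hw : Aᵀ.mulVec w = 0) :
    ∀ i : Fin s, (i : ℕ) ≠ 0 → w i = 0 := by
  obtain ⟨hlt, hrow0, hunit⟩ := hCK
  match s, A, w, hw, hrow0, hunit with
  | 0, A, w, hw, hrow0, hunit => exact fun i _ => absurd i.isLt (by omega)
  | (n+1), A, w, hw, hrow0, hunit =>
    have h2 : (Ahat A)ᵀ.mulVec (fun k => w (finSucc' k)) = 0 := by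
      funext j
      have h := congrFun hw (finSucc' j)
      simp only [Matrix.mulVec, dotProduct, Matrix.transpose_apply, Pi.zero_apply] at h ⊢
      rw [Fin.sum_univ_succ] at h
      rw [hrow0 0 _ rfl, zero_mul, zero_add] at h
      rw [← h]
      apply Finset.sum_congr rfl
      intro k _
      simp [Ahat, finSucc', Fin.succ]
    have hinj := Matrix.mulVec_injective_iff_isUnit.2 ((Matrix.isUnit_transpose _).2 (by exact hunit))
    have h3 : (fun k => w (finSucc' k)) = 0 := by
      apply hinj
      rw [h2, Matrix.mulVec_zero]
    intro i hi
    have : i = finSucc' ⟨(i:ℕ) - 1, by have := i.isLt; omega⟩ := by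
      apply Fin.ext
      simp only [finSucc']
      omega
    rw [this]
    exact congrFun h3 _

/-- necessary conditions on M for condition (M1) (Proposition 6.1, part 1). -/
theorem M1_necessary (s : ℕ) (A : Matrix (Fin s) (Fin s) ℝ) (hCK : TypeCK A)
    (v : Fin s → ℝ) (hv : NullGen A v) (M : Matrix (Fin s) (Fin s) ℝ) :
    (¬ (M * A + (M * A)ᵀ).PosDef) ∧
    ((M * A + (M * A)ᵀ).PosSemidef → (M * A + (M * A)ᵀ).rank = s - 1 →
      ∀ i : Fin s, (i : ℕ) ≠ 0 → Mᵀ.mulVec v i = 0) ∧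
    ((∀ i : Fin s, (i : ℕ) ≠ 0 → Mᵀ.mulVec v i = 0) →
      (M * A + (M * A)ᵀ).mulVec v = 0 ∧
      ∃ x : Fin s → ℝ, x ≠ 0 ∧ (M * A + (M * A)ᵀ).mulVec x = 0) := by
  have hAv : A.mulVec v = 0 := hv.2.1
  have hSv0 : (M * A + (M * A)ᵀ).mulVec v = Aᵀ.mulVec (Mᵀ.mulVec v) := by
    rw [Matrix.add_mulVec, Matrix.transpose_mul, ← Matrix.mulVec_mulVec,
      ← Matrix.mulVec_mulVec, hAv, Matrix.mulVec_zero, zero_add]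
  have hquad : v ⬝ᵥ (M * A + (M * A)ᵀ).mulVec v = 0 := by
    rw [hSv0, Matrix.dotProduct_mulVec, Matrix.vecMul_transpose, hAv, zero_dotProduct]
  refine ⟨?_, ?_, ?_⟩
  · intro hPD
    have h := hPD.dotProduct_mulVec_pos hv.1
    rw [show star v = v from rfl, hquad] at h
    exact lt_irrefl 0 h
  · intro hPS _
    have h0 : (M * A + (M * A)ᵀ).mulVec v = 0 := by
      refine (hPS.dotProduct_mulVec_zero_iff v).1 ?_
      rw [show star v = v from rfl, hquad]
    rw [hSv0] at h0
    exact key A hCK _ h0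
  · intro h
    have hw : Aᵀ.mulVec (Mᵀ.mulVec v) = 0 := by
      funext j
      simp only [Matrix.mulVec, dotProduct, Matrix.transpose_apply, Pi.zero_apply]
      refine Finset.sum_eq_zero fun i _ => ?_
      by_cases hi : (i : ℕ) = 0
      · rw [hCK.2.1 i j hi, zero_mul]
      · have := h i hi
        simp only [Matrix.mulVec, dotProduct, Matrix.transpose_apply] at this
        rw [this, mul_zero]
    rw [hSv0]
    exact ⟨hw, v, hv.1, by rw [hSv0, hw]⟩
end
end

section
/- Let M be any s×s real matrix (s ≥ 2) and define M_* := M B + C, where B is the s×s matrix with B_{i1} = −1 and B_{ii} = 1 for 2 ≤ i ≤ s and all other entries zero, and C is the s×s matrix with C_{11} = 1, C_{ss} = −1 and all other entries zero. Let e = (1,…,1)ᵀ ∈ ℝ^s. Then: (i) the matrix M_* + M_*ᵀ is not positive definite; (ii) if M_* + M_*ᵀ is positive semidefinite of rank s−1, then (Mᵀ e)ᵢ = 0 for i = 2,…,s−1 and (Mᵀ e)_s = 2; (iii) conversely, if (Mᵀ e)ᵢ = 0 for i = 2,…,s−1 and (Mᵀ e)_s = 2, then (M_* + M_*ᵀ)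 e = 0, so 0 is an eigenvalue of M_* + M_*ᵀ. -/
noncomputable section

open Real Matrix

namespace M2helper

variable {s : ℕ}

lemma ind_sum (m : Fin s) (c : ℝ) :
    ∑ j : Fin s, (if (j : ℕ) = (m : ℕ) then c else 0) = c := by
  have h : ∀ j : Fin s, (if (j : ℕ) = (m : ℕ) then c else 0) = (if j = m then c else 0) := by
    intro j
    by_cases hj : j = m
    · rw [if_pos hj, if_pos (by rw [hj])]
    · rw [if_neg hj, if_neg (fun h => hj (Fin.ext h))]
  rw [Finset.sum_congr rfl (fun j _ => h j), Finset.sum_ite_eq' Finset.univ m]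
  simp

lemma brow (hs : 2 ≤ s) (k : Fin s) : ∑ j, Bmat s k j = 0 := by
  by_cases hk : (k : ℕ) = 0
  · simp [Bmat, hk]
  · have hrw : ∀ j : Fin s, Bmat s k j =
        (if (j : ℕ) = 0 then (-1 : ℝ) else 0) + (if j = k then 1 else 0) := by
      intro j
      simp only [Bmat, Matrix.of_apply, if_neg hk]
      by_cases hj : (j : ℕ) = 0
      · have h2 : j ≠ k := fun h => hk (h ▸ hj)
        rw [if_pos hj, if_pos hj, if_neg h2, add_zero]
      · rw [if_neg hj, if_neg hj, zero_add]
    rw [Finset.sum_congr rfl (fun j _ => hrw j), Finset.sum_add_distrib]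
    have h0 : ((⟨0, by omega⟩ : Fin s) : ℕ) = 0 := rfl
    rw [show (∑ j : Fin s, (if (j : ℕ) = 0 then (-1 : ℝ) else 0))
        = ∑ j : Fin s, (if (j : ℕ) = ((⟨0, by omega⟩ : Fin s) : ℕ) then (-1 : ℝ) else 0) by rfl,
      ind_sum, Finset.sum_ite_eq' Finset.univ k]
    simp

lemma crow (hs : 2 ≤ s) (i : Fin s) : ∑ j, Cmat s i j =
    (if (i : ℕ) = 0 then (1 : ℝ) else 0) + (if (i : ℕ) = s - 1 then (-1 : ℝ) else 0) := by
  have hz : ((⟨0, by omega⟩ : Fin s) : ℕ) = 0 := rfl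
  have hl : ((⟨s - 1, by omega⟩ : Fin s) : ℕ) = s - 1 := rfl
  simp only [Cmat, Matrix.of_apply]
  rw [Finset.sum_add_distrib]
  congr 1
  · by_cases hi : (i : ℕ) = 0
    · simp only [hi, true_and, if_pos]
      rw [show (∑ j : Fin s, (if (j : ℕ) = 0 then (1 : ℝ) else 0))
          = ∑ j : Fin s, (if (j : ℕ) = ((⟨0, by omega⟩ : Fin s) : ℕ) then (1 : ℝ) else 0) by rfl,
        ind_sum]
    · simp [hi]
  · by_cases hi : (i : ℕ) = s - 1
    · simp only [hi, true_and, if_pos]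
      rw [show (∑ j : Fin s, (if (j : ℕ) = s - 1 then (-1 : ℝ) else 0))
          = ∑ j : Fin s, (if (j : ℕ) = ((⟨s - 1, by omega⟩ : Fin s) : ℕ) then (-1 : ℝ) else 0) by rfl,
        ind_sum]
    · simp [hi]

lemma ccol (hs : 2 ≤ s) (i : Fin s) : ∑ j, Cmat s j i =
    (if (i : ℕ) = 0 then (1 : ℝ) else 0) + (if (i : ℕ) = s - 1 then (-1 : ℝ) else 0) := by
  have h : ∀ j : Fin s, Cmat s j i = Cmat s i j := by
    intro j; simp only [Cmat, Matrix.of_apply, and_comm]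
  rw [Finset.sum_congr rfl (fun j _ => h j), crow hs]

end M2helper

/-- necessary conditions on M for condition (M2) (Proposition 6.1, part 2). -/
theorem M2_necessary (s : ℕ) (hs : 2 ≤ s) (M : Matrix (Fin s) (Fin s) ℝ) :
    (¬ (Mstar M + (Mstar M)ᵀ).PosDef) ∧
    ((Mstar M + (Mstar M)ᵀ).PosSemidef → (Mstar M + (Mstar M)ᵀ).rank = s - 1 →
      (∀ i : Fin s, 1 ≤ (i : ℕ) → (i : ℕ) < s - 1 → Mᵀ.mulVec (fun _ => (1:ℝ)) i = 0) ∧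
      (∀ i : Fin s, (i : ℕ) = s - 1 → Mᵀ.mulVec (fun _ => (1:ℝ)) i = 2)) ∧
    (((∀ i : Fin s, 1 ≤ (i : ℕ) → (i : ℕ) < s - 1 → Mᵀ.mulVec (fun _ => (1:ℝ)) i = 0) ∧
      (∀ i : Fin s, (i : ℕ) = s - 1 → Mᵀ.mulVec (fun _ => (1:ℝ)) i = 2)) →
      (Mstar M + (Mstar M)ᵀ).mulVec (fun _ => (1:ℝ)) = 0 ∧
      ∃ x : Fin s → ℝ, x ≠ 0 ∧ (Mstar M + (Mstar M)ᵀ).mulVec x = 0) := by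
  classical
  set e : Fin s → ℝ := fun _ => (1 : ℝ) with he
  set S : Matrix (Fin s) (Fin s) ℝ := Mstar M + (Mstar M)ᵀ with hSdef
  set v : Fin s → ℝ := fun k => ∑ j, M j k with hv
  have hvt : ∀ i, Mᵀ.mulVec (fun _ => (1 : ℝ)) i = v i := by
    intro i
    simp [Matrix.mulVec, dotProduct, Matrix.transpose_apply, hv]
  set w : Fin s → ℝ := fun i => ∑ k, v k * Bmat s k i with hw
  -- row sums of Mstar
  have hMstarRow : ∀ i : Fin s, ∑ j, Mstar M i j =
      (if (i : ℕ) = 0 then (1 : ℝ) else 0) + (if (i : ℕ) = s - 1 then (-1 : ℝ) else 0) := by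
    intro i
    simp only [Mstar, Matrix.add_apply, Matrix.mul_apply]
    rw [Finset.sum_add_distrib, Finset.sum_comm]
    rw [Finset.sum_congr rfl (fun k _ => (Finset.mul_sum Finset.univ (fun x => Bmat s k x) (M i k)).symm)]
    rw [Finset.sum_congr rfl (fun k _ => by rw [M2helper.brow hs k, mul_zero])]
    rw [Finset.sum_const_zero, zero_add, M2helper.crow hs]
  -- column sums of Mstar
  have hMstarCol : ∀ i : Fin s, ∑ j, Mstar M j i =
      w i + ((if (i : ℕ) = 0 then (1 : ℝ) else 0) + (if (i : ℕ) = s - 1 then (-1 : ℝ) else 0)) := by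
    intro i
    simp only [Mstar, Matrix.add_apply, Matrix.mul_apply]
    rw [Finset.sum_add_distrib, M2helper.ccol hs]
    congr 1
    rw [Finset.sum_comm, hw]
    exact Finset.sum_congr rfl (fun k _ => by
      rw [hv]
      exact (Finset.sum_mul _ _ _).symm)
  have hSe : ∀ i : Fin s, S.mulVec e i =
      (if (i : ℕ) = 0 then (2 : ℝ) else 0) + (if (i : ℕ) = s - 1 then (-2 : ℝ) else 0) + w i := by
    intro i
    have : S.mulVec e i = (∑ j, Mstar M i j) + ∑ j, Mstar M j i := by
      simp only [hSdef, Matrix.mulVec, dotProduct, Matrix.add_apply,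
        Matrix.transpose_apply, he, mul_one, Finset.sum_add_distrib]
    rw [this, hMstarRow, hMstarCol]
    have hns : ¬ (0 : ℕ) = s - 1 := by omega
    have hns' : ¬ s - 1 = 0 := by omega
    by_cases hi0 : (i : ℕ) = 0 <;> by_cases hil : (i : ℕ) = s - 1 <;>
      first
        | omega
        | (simp [hi0, hil, hns, hns']; try ring)
  -- quadratic form at e is zero
  have hquad : dotProduct e (S.mulVec e) = 0 := by
    have : dotProduct e (S.mulVec e) = ∑ i, S.mulVec e i := by
      simp [dotProduct, he]
    rw [this, Finset.sum_congr rfl (fun i _ => hSe i)]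
    rw [Finset.sum_add_distrib, Finset.sum_add_distrib]
    have h1 : ∑ i : Fin s, (if (i : ℕ) = 0 then (2 : ℝ) else 0) = 2 := by
      have := M2helper.ind_sum (s := s) ⟨0, by omega⟩ (2 : ℝ)
      simpa using this
    have h2 : ∑ i : Fin s, (if (i : ℕ) = s - 1 then (-2 : ℝ) else 0) = -2 := by
      have := M2helper.ind_sum (s := s) ⟨s - 1, by omega⟩ (-2 : ℝ)
      simpa using this
    have h3 : ∑ i, w i = 0 := by
      rw [hw, Finset.sum_comm]
      rw [Finset.sum_congr rfl (fun k _ => (Finset.mul_sum Finset.univ (fun x => Bmat s k x) (v k)).symm)]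
      rw [Finset.sum_congr rfl (fun k _ => by rw [M2helper.brow hs k, mul_zero])]
      exact Finset.sum_const_zero
    rw [h1, h2, h3]; ring
  have hene : e ≠ 0 := by
    intro h
    have := congrFun h ⟨0, by omega⟩
    simp [he] at this
  have hstar : star e = e := by
    funext i; simp [he]
  -- w i = v i for i ≠ 0
  have hwv : ∀ i : Fin s, (i : ℕ) ≠ 0 → w i = v i := by
    intro i hi
    have hb : ∀ k : Fin s, Bmat s k i = (if k = i then (1 : ℝ) else 0) := by
      intro k
      simp only [Bmat, Matrix.of_apply]
      by_cases hk : (k : ℕ) = 0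
      · rw [if_pos hk, if_neg (fun h : k = i => hi (h ▸ hk))]
      · rw [if_neg hk, if_neg hi]
        by_cases hki : k = i
        · rw [if_pos hki.symm, if_pos hki]
        · rw [if_neg (fun h => hki h.symm), if_neg hki]
    rw [hw]
    simp only
    rw [Finset.sum_congr rfl (fun k _ => by rw [hb k, mul_ite, mul_one, mul_zero]),
      Finset.sum_ite_eq' Finset.univ i]
    simp
  refine ⟨?_, ?_, ?_⟩
  · -- not PosDef
    intro hpd
    have := hpd.dotProduct_mulVec_pos hene
    rw [hstar] at this
    rw [hquad] at this
    exact lt_irrefl 0 this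
  · -- PosSemidef → rank → conditions
    intro hpsd _
    have hSe0 : S.mulVec e = 0 := by
      rw [← (hpsd.dotProduct_mulVec_zero_iff e)]
      rw [hstar]; exact hquad
    constructor
    · intro i h1 h2
      rw [hvt]
      have := hSe i
      rw [hSe0] at this
      simp only [Pi.zero_apply] at this
      rw [if_neg (by omega : ¬ (i : ℕ) = 0), if_neg (by omega : ¬ (i : ℕ) = s - 1)] at this
      rw [hwv i (by omega)] at this
      linarith
    · intro i h1
      rw [hvt]
      have := hSe i
      rw [hSe0] at this
      simp only [Pi.zero_apply] at this
      rw [if_neg (by omega : ¬ (i : ℕ) = 0), if_pos h1] at this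
      rw [hwv i (by omega)] at this
      linarith
  · -- converse
    rintro ⟨hmid, hlast⟩
    have hvv : ∀ i : Fin s, (i : ℕ) ≠ 0 → v i = (if (i : ℕ) = s - 1 then (2 : ℝ) else 0) := by
      intro i hi
      by_cases h : (i : ℕ) = s - 1
      · rw [if_pos h, ← hvt]; exact hlast i h
      · rw [if_neg h, ← hvt]; exact hmid i (by omega) (by omega)
    have hw0 : w ⟨0, by omega⟩ = -2 := by
      rw [hw]
      have hb : ∀ k : Fin s, Bmat s k ⟨0, by omega⟩ = (if (k : ℕ) = 0 then (0 : ℝ) else -1) := by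
        intro k
        simp only [Bmat, Matrix.of_apply]
        by_cases hk : (k : ℕ) = 0
        · simp [hk]
        · simp [hk]
      simp only
      rw [Finset.sum_congr rfl (fun k _ => by rw [hb k])]
      rw [Finset.sum_eq_single (⟨s - 1, by omega⟩ : Fin s)]
      · have hl : ((⟨s - 1, by omega⟩ : Fin s) : ℕ) = s - 1 := rfl
        rw [if_neg (by omega : ¬ ((⟨s - 1, by omega⟩ : Fin s) : ℕ) = 0)]
        rw [hvv _ (by omega : ((⟨s - 1, by omega⟩ : Fin s) : ℕ) ≠ 0), if_pos hl]
        ring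
      · intro k _ hk
        by_cases h0 : (k : ℕ) = 0
        · rw [if_pos h0, mul_zero]
        · rw [if_neg h0, hvv k h0,
            if_neg (fun h : (k : ℕ) = s - 1 => hk (Fin.ext h)), zero_mul]
      · intro h; exact absurd (Finset.mem_univ _) h
    have hSe0 : S.mulVec e = 0 := by
      funext i
      rw [hSe i]
      by_cases hi : (i : ℕ) = 0
      · have : i = ⟨0, by omega⟩ := Fin.ext hi
        rw [if_pos hi, if_neg (by omega), this, hw0]
        simp
      · rw [if_neg hi, hwv i hi, hvv i hi]
        by_cases h : (i : ℕ) = s - 1 <;> simp [h]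
    exact ⟨hSe0, e, hene, hSe0⟩
end
end
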